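/- arXiv:2111.11777 — 5 statements merged into one kernel-verified Lean document; each statement's English description precedes it below -/
import Mathlib

section
/- Let G be a finitely generated free group and let H_1 ≤ H_2 ≤ H_3 ≤ ... be an ascending chain of subgroups of G such that every H_i is free of the same finite rank r. Then the chain stabilizes, i.e., there exists N such that H_i = H_N for all i ≥ N. -/
open Subgroup

/-- `(ZMod 2)^m` is generated, as an additive group, by the standard basis vectors. -/
lemma addClosure_singles (m : ℕ) :
    AddSubgroup.closure (Set.range fun k : Fin m => Pi.single k (1 : ZMod 2)) = ⊤ := by
  classical
  rw [eq_top_iff]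
  intro v _
  have hv : v = ∑ k : Fin m, Pi.single k (v k) := (Finset.univ_sum_single v).symm
  rw [hv]
  refine AddSubgroup.sum_mem _ fun k _ => ?_
  have h1 : Pi.single k (v k) = (v k).val • (Pi.single k (1 : ZMod 2) : Fin m → ZMod 2) := by
    funext j
    by_cases hj : j = k
    · subst hj
      simp [nsmul_eq_mul, ZMod.natCast_val, ZMod.cast_id]
    · simp [Pi.single_eq_of_ne hj]
  rw [h1]
  refine AddSubgroup.nsmul_mem _ ?_ _
  exact AddSubgroup.subset_closure ⟨k, rfl⟩

/-- `(ZMod 2)^(r+1)` is not generated (as an additive group) by `r` elements. -/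
lemma not_addClosure_top (r : ℕ) (w : Fin r → (Fin (r + 1) → ZMod 2)) :
    AddSubgroup.closure (Set.range w) ≠ ⊤ := by
  classical
  intro h
  have hsp : Submodule.span (ZMod 2) (Set.range w) = ⊤ := by
    rw [eq_top_iff]
    intro x _
    have hx : x ∈ AddSubgroup.closure (Set.range w) := h ▸ AddSubgroup.mem_top x
    have hle : AddSubgroup.closure (Set.range w) ≤
        (Submodule.span (ZMod 2) (Set.range w)).toAddSubgroup :=
      (AddSubgroup.closure_le _).2 Submodule.subset_span
    exact hle hx
  have h1 := finrank_span_le_card (R := ZMod 2) (Set.range w)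
  rw [hsp, finrank_top, Module.finrank_fintype_fun_eq_card] at h1
  have h2 : (Set.range w).toFinset.card ≤ r := by
    calc (Set.range w).toFinset.card = Fintype.card (Set.range w) := Set.toFinset_card _
    _ ≤ Fintype.card (Fin r) := Fintype.card_range_le w
    _ = r := Fintype.card_fin r
  simp only [Fintype.card_fin] at h1
  omega

/-- A group isomorphic to a free group of rank `r` admits no homomorphism onto
`(ZMod 2)^(r+1)` (multiplicatively). -/
lemma no_surj_onto_vec (r : ℕ) (G : Type*) [Group G] (u : G ≃* FreeGroup (Fin r))
    (Φ : G →* Multiplicative (Fin (r + 1) → ZMod 2))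
    (hr : ∀ k : Fin (r + 1),
      Multiplicative.ofAdd (Pi.single k (1 : ZMod 2)) ∈ Φ.range) : False := by
  classical
  -- Φ is surjective
  have htop : Φ.range = ⊤ := by
    rw [eq_top_iff]
    intro x _
    have hx : x.toAdd ∈ AddSubgroup.closure
        (Set.range fun k : Fin (r + 1) => Pi.single k (1 : ZMod 2)) := by
      rw [addClosure_singles]; trivial
    have key : Multiplicative.ofAdd x.toAdd ∈ Φ.range := by
      refine AddSubgroup.closure_induction
        (p := fun a _ => Multiplicative.ofAdd a ∈ Φ.range) ?_ ?_ ?_ ?_ hx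
      · rintro a ⟨k, rfl⟩; exact hr k
      · exact one_mem _
      · intro a b _ _ ha hb; exact mul_mem ha hb
      · intro a _ ha; exact inv_mem ha
    simpa using key
  have hsurj : Function.Surjective Φ := MonoidHom.range_eq_top.1 htop
  -- transfer to the free group
  set Ψ : FreeGroup (Fin r) →* Multiplicative (Fin (r + 1) → ZMod 2) :=
    Φ.comp u.symm.toMonoidHom with hΨ
  have hΨsurj : Function.Surjective Ψ := hsurj.comp u.symm.surjective
  have h2 : Subgroup.closure (Set.range fun j => Ψ (FreeGroup.of j)) = ⊤ := by
    have h3 := congrArg (Subgroup.map Ψ) (FreeGroup.closure_range_of (Fin r))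
    rw [MonoidHom.map_closure, ← Set.range_comp, Subgroup.map_top_of_surjective _ hΨsurj] at h3
    exact h3
  -- go additive and contradict
  apply not_addClosure_top r (fun j => (Ψ (FreeGroup.of j)).toAdd)
  rw [eq_top_iff]
  intro v _
  have hv : Multiplicative.ofAdd v ∈
      Subgroup.closure (Set.range fun j => Ψ (FreeGroup.of j)) := by
    rw [h2]; trivial
  have key : (Multiplicative.ofAdd v).toAdd ∈
      AddSubgroup.closure (Set.range fun j => (Ψ (FreeGroup.of j)).toAdd) := by
    refine Subgroup.closure_induction
      (p := fun x _ => x.toAdd ∈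
        AddSubgroup.closure (Set.range fun j => (Ψ (FreeGroup.of j)).toAdd)) ?_ ?_ ?_ ?_ hv
    · rintro x ⟨j, rfl⟩; exact AddSubgroup.subset_closure ⟨j, rfl⟩
    · exact AddSubgroup.zero_mem _
    · intro a b _ _ ha hb; exact AddSubgroup.add_mem _ ha hb
    · intro a _ ha; exact AddSubgroup.neg_mem _ ha
  simpa using key

/-- Takahasi–Higman: an ascending chain of subgroups of constant finite rank
in a finitely generated free group stabilizes. -/
theorem takahasi_higman (n r : ℕ) (H : ℕ → Subgroup (FreeGroup (Fin n)))
    (hmono : Monotone H)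
    (hfree : ∀ i, Nonempty (↥(H i) ≃* FreeGroup (Fin r))) :
    ∃ N, ∀ i, N ≤ i → H i = H N := by
  classical
  set L : Subgroup (FreeGroup (Fin n)) := ⨆ i, H i with hLdef
  have hdir : Directed (· ≤ ·) H := hmono.directed_le
  have hmem : ∀ x, x ∈ L ↔ ∃ i, x ∈ H i := fun x => Subgroup.mem_iSup_of_directed hdir
  set e : ↥L ≃* FreeGroup (IsFreeGroup.Generators ↥L) := IsFreeGroup.toFreeGroup ↥L with he
  cases finite_or_infinite (IsFreeGroup.Generators ↥L) with
  | inl hfin =>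
    haveI := Fintype.ofFinite (IsFreeGroup.Generators ↥L)
    set c : IsFreeGroup.Generators ↥L → FreeGroup (Fin n) :=
      fun b => ((e.symm (FreeGroup.of b) : ↥L) : FreeGroup (Fin n)) with hc
    have hLc : L = Subgroup.closure (Set.range c) := by
      have h1 : Subgroup.closure (Set.range fun b => e.symm (FreeGroup.of b))
          = (⊤ : Subgroup ↥L) := by
        have h2 := congrArg (Subgroup.map e.symm.toMonoidHom)
          (FreeGroup.closure_range_of (IsFreeGroup.Generators ↥L))
        rw [MonoidHom.map_closure, ← Set.range_comp,
          Subgroup.map_top_of_surjective _ e.symm.surjective] at h2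
        exact h2
      have h3 := congrArg (Subgroup.map L.subtype) h1
      rw [MonoidHom.map_closure, ← Set.range_comp] at h3
      have h4 : Subgroup.map L.subtype ⊤ = L := by
        rw [← MonoidHom.range_eq_map, Subgroup.range_subtype]
      rw [h4] at h3
      exact h3.symm
    have hcL : ∀ b, c b ∈ L := fun b => (e.symm (FreeGroup.of b)).2
    choose idx hidx using fun b => (hmem (c b)).1 (hcL b)
    refine ⟨Finset.univ.sup idx, fun i hi => ?_⟩
    have hLN : L ≤ H (Finset.univ.sup idx) := by
      refine le_trans (le_of_eq hLc) ?_
      refine (Subgroup.closure_le _).2 ?_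
      rintro x ⟨b, rfl⟩
      exact hmono (Finset.le_sup (Finset.mem_univ b)) (hidx b)
    exact le_antisymm ((le_iSup H i).trans hLN) (hmono hi)
  | inr hinf =>
    exfalso
    set f : Fin (r + 1) ↪ IsFreeGroup.Generators ↥L :=
      (Fin.valEmbedding.trans (Infinite.natEmbedding _)) with hf
    set g : IsFreeGroup.Generators ↥L → Multiplicative (Fin (r + 1) → ZMod 2) :=
      fun b => if h : ∃ k, f k = b then
        Multiplicative.ofAdd (Pi.single h.choose (1 : ZMod 2)) else 1 with hg
    set χ : ↥L →* Multiplicative (Fin (r + 1) → ZMod 2) :=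
      (FreeGroup.lift g).comp e.toMonoidHom with hχ
    set a : Fin (r + 1) → ↥L := fun k => e.symm (FreeGroup.of (f k)) with ha
    choose idx hidx using fun k => (hmem (a k)).1 (a k).2
    set I := Finset.univ.sup idx with hI
    have haI : ∀ k, ((a k : FreeGroup (Fin n))) ∈ H I :=
      fun k => hmono (Finset.le_sup (Finset.mem_univ k)) (hidx k)
    obtain ⟨u⟩ := hfree I
    refine no_surj_onto_vec r _ u (χ.comp (Subgroup.inclusion (le_iSup H I))) fun k => ?_
    refine ⟨⟨(a k : FreeGroup (Fin n)), haI k⟩, ?_⟩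
    have hincl : (Subgroup.inclusion (le_iSup H I))
        ⟨(a k : FreeGroup (Fin n)), haI k⟩ = a k := rfl
    show χ ((Subgroup.inclusion (le_iSup H I)) ⟨(a k : FreeGroup (Fin n)), haI k⟩) = _
    rw [hincl]
    show FreeGroup.lift g (e (e.symm (FreeGroup.of (f k)))) = _
    rw [e.apply_symm_apply, FreeGroup.lift_apply_of]
    have hk : ∃ k', f k' = f k := ⟨k, rfl⟩
    have hchoose : hk.choose = k := f.injective hk.choose_spec
    rw [hg]
    simp only [dif_pos hk, hchoose]
end

section
/- Let G be a group and let H_1 ≤ H_2 ≤ ... ≤ G be an ascending chain of free subgroups all of the same finite rank r that does not stabilize. Then there exists an ascending chain K_1 ≤ K_2 ≤ ... ≤ G of free subgroups of some constant finite rank r' ≤ r that does not stabilize, with the property that for all i, K_i is not contained in any subgroup L of K_{i+1} with rank(L) < rank(K_i). -/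
/-- Auxiliary: if infinitely many indices of a non-stabilizing monotone chain admit a
rank-`s` free subgroup between consecutive terms, then there is a non-stabilizing
monotone chain of rank-`s` free subgroups. -/
lemma chain_of_infinite_bad {G : Type*} [Group G] (s : ℕ) (K : ℕ → Subgroup G)
    (hK : Monotone K) (hKns : ¬ ∃ N, ∀ i, N ≤ i → K i = K N)
    (hinf : {i : ℕ | ∃ L : Subgroup G, K i ≤ L ∧ L ≤ K (i + 1) ∧
      Nonempty (↥L ≃* FreeGroup (Fin s))}.Infinite) :
    ∃ Kc : ℕ → Subgroup G, Monotone Kc ∧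
      (∀ i, Nonempty (↥(Kc i) ≃* FreeGroup (Fin s))) ∧
      ¬ ∃ N, ∀ i, N ≤ i → Kc i = Kc N := by
  classical
  set p : ℕ → Prop := fun i => ∃ L : Subgroup G, K i ≤ L ∧ L ≤ K (i + 1) ∧
      Nonempty (↥L ≃* FreeGroup (Fin s)) with hp
  have hmem : ∀ k, p (Nat.nth p k) := Nat.nth_mem_of_infinite hinf
  have hsm : StrictMono (Nat.nth p) := Nat.nth_strictMono hinf
  set Kc : ℕ → Subgroup G := fun k => (hmem k).choose with hKc
  have hspec : ∀ k, K (Nat.nth p k) ≤ Kc k ∧ Kc k ≤ K (Nat.nth p k + 1) ∧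
      Nonempty (↥(Kc k) ≃* FreeGroup (Fin s)) := fun k => (hmem k).choose_spec
  have hstep : ∀ k, Kc k ≤ Kc (k + 1) := by
    intro k
    calc Kc k ≤ K (Nat.nth p k + 1) := (hspec k).2.1
      _ ≤ K (Nat.nth p (k + 1)) := hK (hsm (Nat.lt_succ_self k))
      _ ≤ Kc (k + 1) := (hspec (k + 1)).1
  refine ⟨Kc, monotone_nat_of_le_succ hstep, fun k => (hspec k).2.2, ?_⟩
  rintro ⟨N, hN⟩
  -- then K (nth p k + 1) = Kc N for all k ≥ N, so K stabilizes
  have hKconst : ∀ k, N ≤ k → K (Nat.nth p k + 1) = Kc N := by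
    intro k hk
    have h1 : Kc k ≤ K (Nat.nth p k + 1) := (hspec k).2.1
    have h2 : K (Nat.nth p k + 1) ≤ K (Nat.nth p (k + 1)) := hK (hsm (Nat.lt_succ_self k))
    have h3 : K (Nat.nth p (k + 1)) ≤ Kc (k + 1) := (hspec (k + 1)).1
    have e1 : Kc k = Kc N := hN k hk
    have e2 : Kc (k + 1) = Kc N := hN (k + 1) (le_trans hk (Nat.le_succ k))
    exact le_antisymm (e2 ▸ le_trans h2 h3) (e1 ▸ h1)
  apply hKns
  refine ⟨Nat.nth p N + 1, fun i hi => ?_⟩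
  have hk : ∃ k, N ≤ k ∧ i ≤ Nat.nth p k + 1 := by
    refine ⟨max N i, le_max_left _ _, ?_⟩
    have := hsm.le_apply (x := max N i)
    omega
  obtain ⟨k, hk1, hk2⟩ := hk
  have hup : K i ≤ K (Nat.nth p k + 1) := hK hk2
  have hdown : K (Nat.nth p N + 1) ≤ K i := hK hi
  rw [hKconst k hk1] at hup
  rw [← hKconst N le_rfl] at hup
  exact le_antisymm hup hdown

/-- If a group admits a non-stabilizing ascending chain of free subgroups of
constant rank `r`, then it admits a non-stabilizing ascending chain of free
subgroups of constant rank `r' ≤ r` in which no term is contained in a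
subgroup of the next term of smaller rank. -/
theorem avoid_small_rank_overgroups {G : Type*} [Group G] (r : ℕ)
    (H : ℕ → Subgroup G) (hmono : Monotone H)
    (hfree : ∀ i, Nonempty (↥(H i) ≃* FreeGroup (Fin r)))
    (hns : ¬ ∃ N, ∀ i, N ≤ i → H i = H N) :
    ∃ (r' : ℕ) (K : ℕ → Subgroup G), r' ≤ r ∧ Monotone K ∧
      (∀ i, Nonempty (↥(K i) ≃* FreeGroup (Fin r'))) ∧
      (¬ ∃ N, ∀ i, N ≤ i → K i = K N) ∧
      (∀ i (L : Subgroup G), K i ≤ L → L ≤ K (i + 1) →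
        ∀ s : ℕ, Nonempty (↥L ≃* FreeGroup (Fin s)) → r' ≤ s) := by
  classical
  set P : ℕ → Prop := fun t => ∃ K : ℕ → Subgroup G, Monotone K ∧
      (∀ i, Nonempty (↥(K i) ≃* FreeGroup (Fin t))) ∧
      ¬ ∃ N, ∀ i, N ≤ i → K i = K N with hP
  have hPr : P r := ⟨H, hmono, hfree, hns⟩
  have hex : ∃ t, P t := ⟨r, hPr⟩
  set r' := Nat.find hex with hr'
  obtain ⟨K, hKmono, hKfree, hKns⟩ : P r' := Nat.find_spec hex
  have hr'le : r' ≤ r := Nat.find_le hPr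
  have hmin : ∀ s, s < r' → ¬ P s := fun s hs => Nat.find_min hex hs
  -- each "bad set" for s < r' must be finite
  have hfin : ∀ s, s < r' → {i : ℕ | ∃ L : Subgroup G, K i ≤ L ∧ L ≤ K (i + 1) ∧
      Nonempty (↥L ≃* FreeGroup (Fin s))}.Finite := by
    intro s hs
    by_contra hinf
    exact hmin s hs (chain_of_infinite_bad s K hKmono hKns hinf)
  -- the union of all bad sets is finite, get a bound N
  have hBfin : {i : ℕ | ∃ s, s < r' ∧ ∃ L : Subgroup G, K i ≤ L ∧ L ≤ K (i + 1) ∧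
      Nonempty (↥L ≃* FreeGroup (Fin s))}.Finite := by
    have : {i : ℕ | ∃ s, s < r' ∧ ∃ L : Subgroup G, K i ≤ L ∧ L ≤ K (i + 1) ∧
        Nonempty (↥L ≃* FreeGroup (Fin s))} ⊆
        ⋃ s ∈ Finset.range r', {i : ℕ | ∃ L : Subgroup G, K i ≤ L ∧ L ≤ K (i + 1) ∧
        Nonempty (↥L ≃* FreeGroup (Fin s))} := by
      rintro i ⟨s, hs, hL⟩
      exact Set.mem_biUnion (Finset.mem_range.mpr hs) hL
    exact Set.Finite.subset (Set.Finite.biUnion (Finset.range r').finite_toSet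
      (fun s hs => hfin s (Finset.mem_range.mp hs))) this
  obtain ⟨N, hN⟩ := hBfin.bddAbove
  refine ⟨r', fun j => K (N + 1 + j), hr'le, fun a b hab => hKmono (by omega),
    fun j => hKfree _, ?_, ?_⟩
  · rintro ⟨M, hM⟩
    apply hKns
    refine ⟨N + 1 + M, fun i hi => ?_⟩
    have h1 : K i = K (N + 1 + (i - (N + 1))) := by congr 1; omega
    have h2 : K (N + 1 + (i - (N + 1))) = K (N + 1 + M) := hM (i - (N + 1)) (by omega)
    exact h1.trans h2
  · intro i L h1 h2 s hsfree
    by_contra hlt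
    push_neg at hlt
    have hmem : (N + 1 + i) ∈ {i : ℕ | ∃ s, s < r' ∧ ∃ L : Subgroup G, K i ≤ L ∧
        L ≤ K (i + 1) ∧ Nonempty (↥L ≃* FreeGroup (Fin s))} := by
      exact ⟨s, hlt, L, h1, le_trans h2 (hKmono (by omega)), hsfree⟩
    have := hN hmem
    omega
end

section
/- Let 1 → N → G → S → 1 be a short exact sequence of groups. If N is slender (every subgroup of N is finitely generated) and every ascending chain of finitely generated subgroups of constant rank in S stabilizes, then every ascending chain of subgroups of constant rank in G stabilizes. More precisely: if every ascending chain of subgroups of S each generated by at most r elements and of constant minimal number of generators stabilizes, then the same holds for G. -/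
/-- The minimal number of generators of a subgroup. -/
noncomputable def minGens {G : Type*} [Group G] (H : Subgroup G) : ℕ :=
  sInf {n | ∃ T : Finset G, Subgroup.closure (T : Set G) = H ∧ T.card = n}

lemma minGens_mem {G : Type*} [Group G] (H : Subgroup G) (h : H.FG) :
    minGens H ∈ {n | ∃ T : Finset G, Subgroup.closure (T : Set G) = H ∧ T.card = n} := by
  obtain ⟨T, hT⟩ := h
  exact Nat.sInf_mem ⟨T.card, T, hT, rfl⟩

lemma minGens_map_le {G S : Type*} [Group G] [Group S] (π : G →* S) (H : Subgroup G)
    (h : H.FG) : minGens (H.map π) ≤ minGens H := by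
  classical
  obtain ⟨T, hT, hcard⟩ := minGens_mem H h
  have h1 : Subgroup.closure ((T.image π : Finset S) : Set S) = H.map π := by
    rw [Finset.coe_image, ← MonoidHom.map_closure, hT]
  calc minGens (H.map π) ≤ (T.image π).card :=
        Nat.sInf_le ⟨T.image π, h1, rfl⟩
    _ ≤ T.card := Finset.card_image_le
    _ = minGens H := hcard

lemma fg_map {G S : Type*} [Group G] [Group S] (π : G →* S) (H : Subgroup G)
    (h : H.FG) : (H.map π).FG := by
  classical
  obtain ⟨T, hT⟩ := h
  exact ⟨T.image π, by rw [Finset.coe_image, ← MonoidHom.map_closure, hT]⟩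

/-- Extension lemma: if `1 → N → G → S → 1` is exact, `N` is slender, and every
ascending chain of subgroups of `S` generated by at most `r` elements and of
constant minimal number of generators stabilizes, then the same holds in `G`. -/
theorem extension_lemma {N G S : Type*} [Group N] [Group G] [Group S]
    (ι : N →* G) (π : G →* S)
    (hι : Function.Injective ι) (hπ : Function.Surjective π)
    (hexact : ι.range = π.ker)
    (hslender : ∀ M : Subgroup N, M.FG)
    (r : ℕ)
    (hS : ∀ H : ℕ → Subgroup S, Monotone H → (∀ i, (H i).FG) →
      (∀ i, minGens (H i) = minGens (H 0)) → minGens (H 0) ≤ r →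
      ∃ N', ∀ i, N' ≤ i → H i = H N') :
    ∀ H : ℕ → Subgroup G, Monotone H → (∀ i, (H i).FG) →
      (∀ i, minGens (H i) = minGens (H 0)) → minGens (H 0) ≤ r →
      ∃ N', ∀ i, N' ≤ i → H i = H N' := by
  intro H hmono hfg hconst hle
  classical
  -- the image chain
  set f : ℕ → ℕ := fun i => minGens ((H i).map π) with hf
  have hfbd : ∀ i, f i ≤ r := fun i => by
    calc f i ≤ minGens (H i) := minGens_map_le π (H i) (hfg i)
      _ = minGens (H 0) := hconst i
      _ ≤ r := hle
  -- some value of f occurs infinitely often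
  have hinf : ∃ v, {i | f i = v}.Infinite := by
    by_contra hc
    push_neg at hc
    have hsub : (Set.univ : Set ℕ) ⊆ ⋃ v ∈ Finset.range (r + 1), {i | f i = v} := by
      intro i _
      simp only [Set.mem_iUnion]
      exact ⟨f i, by simpa using Nat.lt_succ_of_le (hfbd i), rfl⟩
    exact Set.infinite_univ
      (Set.Finite.subset (Set.Finite.biUnion (Finset.range (r + 1)).finite_toSet
        fun v _ => hc v) hsub)
  obtain ⟨v, hv⟩ := hinf
  haveI : Infinite {i | f i = v} := Set.infinite_coe_iff.mpr hv
  let g : ℕ ↪o ℕ := Nat.orderEmbeddingOfSet {i | f i = v}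
  have hgmem : ∀ n, f (g n) = v := fun n => by
    have : g n ∈ {i | f i = v} := by
      rw [← Nat.orderEmbeddingOfSet_range {i | f i = v}]
      exact ⟨n, rfl⟩
    exact this
  have hgle : ∀ n, n ≤ g n := fun n => g.strictMono.le_apply
  -- apply hS to the subsequence
  set H' : ℕ → Subgroup S := fun n => (H (g n)).map π with hH'
  have hS0 : ∃ N', ∀ i, N' ≤ i → H' i = H' N' := by
    apply hS
    · exact fun a b hab => Subgroup.map_mono (hmono (g.monotone hab))
    · exact fun i => fg_map π _ (hfg _)
    · intro i; rw [show minGens (H' i) = f (g i) from rfl,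
        show minGens (H' 0) = f (g 0) from rfl, hgmem, hgmem]
    · rw [show minGens (H' 0) = f (g 0) from rfl, hgmem]
      calc v = f (g 0) := (hgmem 0).symm
        _ ≤ r := hfbd _
  obtain ⟨n₀, hn₀⟩ := hS0
  set A := g n₀ with hA
  -- the image chain stabilizes from index A on
  have himg : ∀ i, A ≤ i → (H i).map π = (H A).map π := by
    intro i hi
    have h1 : n₀ ≤ i := le_trans (hgle n₀) hi
    have h2 : (H (g i)).map π = (H A).map π := hn₀ i h1
    refine le_antisymm ?_ (Subgroup.map_mono (hmono hi))
    calc (H i).map π ≤ (H (g i)).map π := Subgroup.map_mono (hmono (hgle i))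
      _ = (H A).map π := h2
  -- the kernel chain
  set M : ℕ → Subgroup N := fun i => (H i).comap ι with hM
  have hMmono : Monotone M := fun a b hab => Subgroup.comap_mono (hmono hab)
  have hMstab : ∃ k, ∀ i, k ≤ i → M i = M k := by
    obtain ⟨T, hT⟩ := hslender (⨆ i, M i)
    have hdir : Directed (· ≤ ·) M := hMmono.directed_le
    have hTmem : ∀ t ∈ T, ∃ i, t ∈ M i := by
      intro t ht
      have : t ∈ ⨆ i, M i := hT ▸ Subgroup.subset_closure ht
      exact (Subgroup.mem_iSup_of_directed hdir).mp this
    have hcomm : ∀ T' : Finset N, (∀ t ∈ T', ∃ i, t ∈ M i) → ∃ k, ∀ t ∈ T', t ∈ M k := by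
      intro T'
      induction T' using Finset.induction with
      | empty => exact fun _ => ⟨0, fun t ht => absurd ht (Finset.notMem_empty t)⟩
      | @insert a T'' ha ih =>
        intro hmem
        obtain ⟨k₁, hk₁⟩ := ih (fun t ht => hmem t (Finset.mem_insert_of_mem ht))
        obtain ⟨k₂, hk₂⟩ := hmem a (Finset.mem_insert_self a T'')
        refine ⟨max k₁ k₂, fun t ht => ?_⟩
        rcases Finset.mem_insert.mp ht with rfl | ht'
        · exact hMmono (le_max_right k₁ k₂) hk₂
        · exact hMmono (le_max_left k₁ k₂) (hk₁ t ht')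
    obtain ⟨k, hk⟩ := hcomm T hTmem
    have hle' : (⨆ i, M i) ≤ M k := by
      rw [← hT]
      exact (Subgroup.closure_le _).mpr hk
    refine ⟨k, fun i hi => le_antisymm ?_ (hMmono hi)⟩
    exact le_trans (le_iSup M i) hle'
  obtain ⟨k, hk⟩ := hMstab
  -- combine
  refine ⟨max A k, fun i hi => ?_⟩
  have hA' : A ≤ i := le_trans (le_max_left A k) hi
  have hk' : k ≤ i := le_trans (le_max_right A k) hi
  refine le_antisymm (fun x hx => ?_) (hmono hi)
  -- x ∈ H i, show x ∈ H (max A k)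
  have h1 : π x ∈ (H i).map π := ⟨x, hx, rfl⟩
  have h2 : (H i).map π = (H (max A k)).map π := by
    rw [himg i hA', himg (max A k) (le_max_left A k)]
  rw [h2] at h1
  obtain ⟨y, hy, hyx⟩ := h1
  have hker : x * y⁻¹ ∈ π.ker := by
    simp [MonoidHom.mem_ker, map_mul, hyx]
  rw [← hexact] at hker
  obtain ⟨n, hn⟩ := hker
  have hnMi : n ∈ M i := by
    show ι n ∈ H i
    rw [hn]
    exact mul_mem hx (inv_mem (hmono hi hy))
  have hnM : n ∈ M (max A k) := by
    rw [hk i hk', ← hk (max A k) (le_max_right A k)] at hnMi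
    exact hnMi
  have : x = ι n * y := by rw [hn]; group
  rw [this]
  exact mul_mem hnM hy
end

section
/- Let F be a free group of finite rank r ≥ 1 and suppose F = A *_{⟨c⟩} B is an amalgamated free product over an infinite cyclic subgroup ⟨c⟩, with A and B finitely generated and c ≠ 1, A ≠ ⟨c⟩ ≠ B. Then rank(F) = rank(A) + rank(B) − 1. -/
/-!
Count homomorphisms to `ℚ`. By the universal property, `Hom(F, ℚ)` is the kernel of
`(φ, ψ) ↦ φ c - ψ c` on `Hom(A, ℚ) × Hom(B, ℚ)`, so `r = a + b - 1` or `r = a + b`.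
In the second case the free bases of `A` and `B`, which together generate `F`, give a surjection
`F_{a+b} → F ≅ F_{a+b}` whose kernel contains the nontrivial word `c_A c_B⁻¹`. This is impossible
because finitely generated free groups are residually finite, hence Hopfian; residual finiteness
comes from letting a reduced word act by permutations on the finite set of its suffixes.
-/

open Function Equiv Module

theorem Set.InjOn.exists_perm_eqOn {α : Type*} [Finite α] {s : Set α} {f : α → α}
    (h : s.InjOn f) : ∃ σ : Perm α, s.EqOn σ f := by
  classical
  exact ⟨(Equiv.Set.imageOfInjOn f s h).extendSubtype,
    fun x hx => extendSubtype_apply_of_mem (Equiv.Set.imageOfInjOn f s h) x hx⟩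

instance List.finite_isSuffix {α : Type*} (L : List α) : Finite {s // s <:+ L} :=
  Set.Finite.to_subtype (s := {s | s <:+ L}) <| by
    simpa [List.mem_tails] using List.finite_toSet L.tails

namespace FreeGroup

variable {α : Type*}

theorem IsReduced.not_cons_cons_suffix {L : List (α × Bool)} (hL : IsReduced L) (x : α)
    (b : Bool) (s : List (α × Bool)) : ¬ (x, b) :: (x, !b) :: s <:+ L := fun h => by
  have := hL.infix h.isInfix
  simp [isReduced_cons_cons] at this

/-- `σ` prepends `(x, true)` to a suffix when the result is again a suffix, and otherwise strips a
leading `(x, false)`; reducedness of `L` makes this partial map injective. -/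
theorem exists_perm_suffix_cons {L : List (α × Bool)} (hL : IsReduced L) (x : α) :
    ∃ σ : Perm {s // s <:+ L}, ∀ (b : Bool) (s : List (α × Bool)) (h : (x, b) :: s <:+ L),
      cond b σ σ⁻¹ ⟨s, (List.suffix_cons _ _).trans h⟩ = ⟨_, h⟩ := by
  classical
  let shift (s : {s // s <:+ L}) : {s // s <:+ L} :=
    if h : (x, true) :: s.1 <:+ L then ⟨_, h⟩ else ⟨s.1.tail, (List.tail_suffix _).trans s.2⟩
  obtain ⟨σ, hσ⟩ := Set.InjOn.exists_perm_eqOn (f := shift)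
    (s := {s | (x, true) :: s.1 <:+ L ∨ s.1.head? = some (x, false)}) <| by
    rintro ⟨s, hs⟩ hs' ⟨t, ht⟩ ht' hst
    simp only [shift] at hst
    split_ifs at hst with h1 h2 h2
    · simpa using hst
    · obtain ⟨t, rfl⟩ := List.head?_eq_some_iff.1 (ht'.resolve_left h2)
      simp only [Subtype.mk.injEq, List.tail_cons] at hst
      subst hst
      exact (hL.not_cons_cons_suffix x false s ht).elim
    · obtain ⟨s, rfl⟩ := List.head?_eq_some_iff.1 (hs'.resolve_left h1)
      simp only [Subtype.mk.injEq, List.tail_cons] at hst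
      subst hst
      exact (hL.not_cons_cons_suffix x false t hs).elim
    · obtain ⟨s, rfl⟩ := List.head?_eq_some_iff.1 (hs'.resolve_left h1)
      obtain ⟨t, rfl⟩ := List.head?_eq_some_iff.1 (ht'.resolve_left h2)
      simpa using hst
  refine ⟨σ, fun b s h => ?_⟩
  cases b
  · rw [cond_false, Perm.inv_eq_iff_eq]
    exact ((hσ (Or.inr rfl)).trans (dif_neg (hL.not_cons_cons_suffix x true s))).symm
  · exact (hσ (Or.inl h)).trans (dif_pos h)

theorem lift_mk_suffix {L : List (α × Bool)} (σ : α → Perm {s // s <:+ L})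
    (hσ : ∀ x (b : Bool) s (h : (x, b) :: s <:+ L),
      cond b (σ x) (σ x)⁻¹ ⟨s, (List.suffix_cons _ _).trans h⟩ = ⟨_, h⟩) :
    ∀ s (h : s <:+ L), lift σ (mk s) ⟨[], List.nil_suffix⟩ = ⟨s, h⟩
  | [], _ => rfl
  | (x, b) :: s, h => by
    rw [lift_mk, List.map_cons, List.prod_cons, Perm.mul_apply, ← lift_mk,
      lift_mk_suffix σ hσ s ((List.suffix_cons _ _).trans h)]
    exact hσ x b s h

instance : Group.ResiduallyFinite (FreeGroup α) :=
  Group.residuallyFinite_of_forall_exists_finite_monoidHom fun w hw => by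
    classical
    choose σ hσ using exists_perm_suffix_cons (isReduced_toWord (x := w))
    refine ⟨Perm {s // s <:+ w.toWord}, inferInstance, inferInstance, lift σ, fun h => hw ?_⟩
    have := lift_mk_suffix σ hσ _ List.suffix_rfl
    rw [mk_toWord, h] at this
    exact toWord_eq_nil_iff.1 (congrArg Subtype.val this).symm

end FreeGroup

section Hopfian

variable {G H : Type*} [Group G] [Group H]

instance MonoidHom.finite_of_fg [Group.FG G] [Finite H] : Finite (G →* H) := by
  obtain ⟨S, hS⟩ := Group.FG.out (G := G)
  exact Finite.of_injective (fun f : G →* H => fun s : S => f s) fun f g hfg =>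
    MonoidHom.eq_of_eqOn_dense hS fun s hs => congrFun hfg ⟨s, hs⟩

theorem MonoidHom.injective_of_surjective_of_residuallyFinite [Group.FG G]
    [Group.ResiduallyFinite G] {f : G →* G} (hf : Surjective f) : Injective f := by
  refine (injective_iff_map_eq_one f).2 fun w hw => ?_
  by_contra hne
  obtain ⟨N, hwN⟩ := Group.exists_finiteIndexNormalSubgroup_notMem w hne
  have hcomp : Injective fun g : G →* G ⧸ N.toSubgroup => g.comp f :=
    fun _ _ => (MonoidHom.cancel_right hf).1
  obtain ⟨g, hg⟩ := Finite.injective_iff_surjective.1 hcomp (QuotientGroup.mk' N.toSubgroup)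
  apply hwN
  rw [← FiniteIndexNormalSubgroup.mem_toSubgroup_iff, ← QuotientGroup.eq_one_iff,
    ← QuotientGroup.mk'_apply, ← hg, MonoidHom.comp_apply, hw, map_one]

theorem MonoidHom.injective_of_surjective_of_mulEquiv [Group.FG G] [Group.ResiduallyFinite G]
    {f : G →* H} (hf : Surjective f) (e : H ≃* G) : Injective f :=
  (e.injective.of_comp_iff f).1 <|
    injective_of_surjective_of_residuallyFinite (f := e.toMonoidHom.comp f) (e.surjective.comp hf)

end Hopfian

section RationalDual

abbrev RationalDual (G : Type*) [Group G] := Additive G →+ ℚ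

variable {G H : Type*} [Group G] [Group H]

def MonoidHom.rationalDualMap (f : G →* H) : RationalDual H →ₗ[ℚ] RationalDual G where
  toFun φ := φ.comp (MonoidHom.toAdditive f)
  map_add' _ _ := rfl
  map_smul' _ _ := rfl

@[simp]
theorem MonoidHom.rationalDualMap_apply (f : G →* H) (φ : RationalDual H) (x : G) :
    f.rationalDualMap φ (Additive.ofMul x) = φ (Additive.ofMul (f x)) := rfl

def MulEquiv.rationalDualCongr (e : G ≃* H) : RationalDual G ≃ₗ[ℚ] RationalDual H :=
  .ofLinearMap e.symm.toMonoidHom.rationalDualMap e.toMonoidHom.rationalDualMap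
    (by ext φ x; simp) (by ext φ x; simp)

def FreeGroup.rationalDualEquiv (ι : Type*) : RationalDual (FreeGroup ι) ≃ₗ[ℚ] (ι → ℚ) where
  toFun φ i := φ (Additive.ofMul (of i))
  invFun v := MonoidHom.toAdditiveLeft (lift fun i => Multiplicative.ofAdd (v i))
  map_add' _ _ := rfl
  map_smul' _ _ := rfl
  left_inv φ := by ext i; simp
  right_inv v := by ext i; simp

theorem finrank_rationalDual_of_mulEquiv {ι : Type*} [Fintype ι] (e : G ≃* FreeGroup ι) :
    finrank ℚ (RationalDual G) = Fintype.card ι := by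
  rw [(e.rationalDualCongr.trans (FreeGroup.rationalDualEquiv ι)).finrank_eq,
    finrank_fintype_fun_eq_card]

theorem finiteDimensional_rationalDual_of_mulEquiv {ι : Type*} [Finite ι] (e : G ≃* FreeGroup ι) :
    FiniteDimensional ℚ (RationalDual G) :=
  (e.rationalDualCongr.trans (FreeGroup.rationalDualEquiv ι)).symm.finiteDimensional

end RationalDual

theorem FreeGroup.lift_map_apply {α β G : Type*} [Group G] (f : α → β) (g : β → G)
    (x : FreeGroup α) : lift g (map f x) = lift (g ∘ f) x :=
  DFunLike.congr_fun (ext_hom ((lift g).comp (map f)) (lift (g ∘ f)) fun a => by simp) x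

namespace Subgroup

variable {F : Type*} [Group F]

/-- `F = A *_⟨c⟩ B`, through the universal property of the pushout (tested on groups in `Type`). -/
def IsAmalgamatedProduct (A B : Subgroup F) (c : F) (hcA : c ∈ A) (hcB : c ∈ B) : Prop :=
  ∀ (K : Type) [Group K] (f : A →* K) (g : B →* K), f ⟨c, hcA⟩ = g ⟨c, hcB⟩ →
    ∃! h : F →* K, h.comp A.subtype = f ∧ h.comp B.subtype = g

namespace IsAmalgamatedProduct

variable {A B : Subgroup F} {c : F} {hcA : c ∈ A} {hcB : c ∈ B}

theorem hom_ext (h : IsAmalgamatedProduct A B c hcA hcB) {K : Type} [Group K] {f g : F →* K}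
    (hfgA : f.comp A.subtype = g.comp A.subtype) (hfgB : f.comp B.subtype = g.comp B.subtype) :
    f = g :=
  (h K _ _ rfl).unique ⟨rfl, rfl⟩ ⟨hfgA.symm, hfgB.symm⟩

/-- The universal property only speaks about groups in `Type`, hence the detour through `Shrink`. -/
theorem sup_eq_top [Small.{0} F] (h : IsAmalgamatedProduct A B c hcA hcB) : A ⊔ B = ⊤ := by
  let S := A ⊔ B
  let ι : S ≃* Shrink.{0} S := Shrink.mulEquiv.symm
  obtain ⟨p, ⟨hpA, hpB⟩, -⟩ := h (Shrink.{0} S) (ι.toMonoidHom.comp (inclusion le_sup_left))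
    (ι.toMonoidHom.comp (inclusion le_sup_right)) rfl
  let κ : F ≃* Shrink.{0} F := Shrink.mulEquiv.symm
  have hid : S.subtype.comp (ι.symm.toMonoidHom.comp p) = MonoidHom.id F := by
    refine (MonoidHom.cancel_left (g := κ.toMonoidHom) κ.injective).1 (h.hom_ext ?_ ?_)
    · ext a
      simp [show p a = ι (inclusion le_sup_left a) from DFunLike.congr_fun hpA a]
    · ext b
      simp [show p b = ι (inclusion le_sup_right b) from DFunLike.congr_fun hpB b]
  rw [eq_top_iff]
  intro x _
  have : ((ι.symm (p x) : S) : F) = x := DFunLike.congr_fun hid x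
  exact this ▸ (ι.symm (p x)).2

theorem exists_rationalDual (h : IsAmalgamatedProduct A B c hcA hcB) (φA : RationalDual A)
    (φB : RationalDual B) (hφ : φA (.ofMul ⟨c, hcA⟩) = φB (.ofMul ⟨c, hcB⟩)) :
    ∃ φ : RationalDual F, A.subtype.rationalDualMap φ = φA ∧ B.subtype.rationalDualMap φ = φB := by
  obtain ⟨p, ⟨hpA, hpB⟩, -⟩ := h (Multiplicative ℚ) (AddMonoidHom.toMultiplicativeRight φA)
    (AddMonoidHom.toMultiplicativeRight φB) (congrArg Multiplicative.ofAdd hφ)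
  refine ⟨MonoidHom.toAdditiveLeft p, ?_, ?_⟩
  · ext a
    simp [← hpA]
  · ext b
    simp [← hpB]

variable (hcA hcB) in
def rationalDualDefect : RationalDual A × RationalDual B →ₗ[ℚ] ℚ where
  toFun p := p.1 (.ofMul ⟨c, hcA⟩) - p.2 (.ofMul ⟨c, hcB⟩)
  map_add' p q := by
    simp only [Prod.fst_add, Prod.snd_add, AddMonoidHom.add_apply]
    ring
  map_smul' r p := by
    simp only [Prod.smul_fst, Prod.smul_snd, AddMonoidHom.smul_apply, smul_eq_mul,
      RingHom.id_apply]
    ring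

theorem finrank_rationalDual (h : IsAmalgamatedProduct A B c hcA hcB)
    [FiniteDimensional ℚ (RationalDual A)] [FiniteDimensional ℚ (RationalDual B)] :
    finrank ℚ (RationalDual F) ≤ finrank ℚ (RationalDual A) + finrank ℚ (RationalDual B) ∧
      finrank ℚ (RationalDual A) + finrank ℚ (RationalDual B) ≤
        finrank ℚ (RationalDual F) + 1 := by
  let R := A.subtype.rationalDualMap.prod B.subtype.rationalDualMap
  let D := rationalDualDefect hcA hcB
  have hR : Injective R := fun φ ψ hφψ => AddMonoidHom.toMultiplicativeRight.injective <| by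
    refine h.hom_ext ?_ ?_
    · ext a
      simpa [R] using DFunLike.congr_fun (congrArg Prod.fst hφψ) (.ofMul a)
    · ext b
      simpa [R] using DFunLike.congr_fun (congrArg Prod.snd hφψ) (.ofMul b)
  have hRD : LinearMap.range R = LinearMap.ker D := by
    ext p
    constructor
    · rintro ⟨φ, rfl⟩
      simp [R, D, rationalDualDefect]
    · intro hp
      obtain ⟨φ, hφA, hφB⟩ := h.exists_rationalDual p.1 p.2 (sub_eq_zero.1 hp)
      exact ⟨φ, Prod.ext hφA hφB⟩
  have hF : finrank ℚ (RationalDual F) = finrank ℚ (LinearMap.ker D) := by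
    rw [← hRD, LinearMap.finrank_range_of_inj hR]
  have hrank := D.finrank_range_add_finrank_ker
  have hD : finrank ℚ (LinearMap.range D) ≤ 1 := (Submodule.finrank_le _).trans_eq (finrank_self ℚ)
  rw [finrank_prod] at hrank
  omega

theorem exists_surjective_not_injective [Small.{0} F] (h : IsAmalgamatedProduct A B c hcA hcB)
    (hc : c ≠ 1) {α β : Type*} (eA : A ≃* FreeGroup α) (eB : B ≃* FreeGroup β) :
    ∃ π : FreeGroup (α ⊕ β) →* F, Surjective π ∧ ¬ Injective π := by
  let π := FreeGroup.lift (Sum.elim (fun i => (eA.symm (.of i) : F)) fun j => (eB.symm (.of j) : F))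
  have hπA (u : FreeGroup α) : π (FreeGroup.map Sum.inl u) = eA.symm u := by
    rw [FreeGroup.lift_map_apply, Sum.elim_comp_inl]
    exact DFunLike.congr_fun (FreeGroup.ext_hom _ (A.subtype.comp eA.symm.toMonoidHom)
      fun i => by simp) u
  have hπB (u : FreeGroup β) : π (FreeGroup.map Sum.inr u) = eB.symm u := by
    rw [FreeGroup.lift_map_apply, Sum.elim_comp_inr]
    exact DFunLike.congr_fun (FreeGroup.ext_hom _ (B.subtype.comp eB.symm.toMonoidHom)
      fun i => by simp) u
  refine ⟨π, ?_, fun hπ => hc ?_⟩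
  · rw [← MonoidHom.range_eq_top, eq_top_iff, ← h.sup_eq_top]
    exact sup_le (fun a ha => ⟨_, (hπA (eA ⟨a, ha⟩)).trans (by simp)⟩)
      (fun b hb => ⟨_, (hπB (eB ⟨b, hb⟩)).trans (by simp)⟩)
  · have hcA' : π (FreeGroup.map Sum.inl (eA ⟨c, hcA⟩)) = c := (hπA _).trans (by simp)
    have hcB' : π (FreeGroup.map Sum.inr (eB ⟨c, hcB⟩)) = c := (hπB _).trans (by simp)
    have hκ := congrArg (FreeGroup.lift (Sum.elim FreeGroup.of (1 : β → FreeGroup α)))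
      (hπ (hcA'.trans hcB'.symm))
    have hlift1 : FreeGroup.lift (1 : β → FreeGroup α) = 1 :=
      FreeGroup.ext_hom _ _ fun _ => by simp
    simpa [FreeGroup.lift_map_apply, FreeGroup.lift_of_eq_id, hlift1] using hκ

end IsAmalgamatedProduct

end Subgroup

theorem shenitzer_general {F : Type*} [Group F] (r a b : ℕ)
    (hF : Nonempty (F ≃* FreeGroup (Fin r)))
    (A B : Subgroup F) (c : F) (hcA : c ∈ A) (hcB : c ∈ B) (hc : c ≠ 1)
    (hAfree : Nonempty (↥A ≃* FreeGroup (Fin a)))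
    (hBfree : Nonempty (↥B ≃* FreeGroup (Fin b)))
    (hpush : ∀ (K : Type) [Group K] (f : ↥A →* K) (g : ↥B →* K),
      f ⟨c, hcA⟩ = g ⟨c, hcB⟩ →
      ∃! h : F →* K, h.comp A.subtype = f ∧ h.comp B.subtype = g) :
    r + 1 = a + b := by
  obtain ⟨e⟩ := hF
  obtain ⟨eA⟩ := hAfree
  obtain ⟨eB⟩ := hBfree
  have h : A.IsAmalgamatedProduct B c hcA hcB := hpush
  have : Small.{0} F := small_of_injective e.injective
  have := finiteDimensional_rationalDual_of_mulEquiv eA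
  have := finiteDimensional_rationalDual_of_mulEquiv eB
  have hrank := h.finrank_rationalDual
  simp only [finrank_rationalDual_of_mulEquiv e, finrank_rationalDual_of_mulEquiv eA,
    finrank_rationalDual_of_mulEquiv eB, Fintype.card_fin] at hrank
  have hne : r ≠ a + b := by
    rintro rfl
    obtain ⟨π, hπ, hπ_not_inj⟩ := h.exists_surjective_not_injective hc eA eB
    exact hπ_not_inj <| π.injective_of_surjective_of_mulEquiv hπ
      (e.trans (FreeGroup.freeGroupCongr finSumFinEquiv.symm))
  omega

/-- Shenitzer's theorem: if a free group `F` of finite rank `r ≥ 1` is an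
amalgamated free product `A *_⟨c⟩ B` over an infinite cyclic subgroup `⟨c⟩`
(expressed via the universal property of the pushout), with `A`, `B` finitely
generated free of ranks `a`, `b`, `c ≠ 1`, `A ≠ ⟨c⟩ ≠ B`, then
`rank F = rank A + rank B - 1`. -/
theorem shenitzer {F : Type*} [Group F] (r a b : ℕ) (hr : 1 ≤ r)
    (hF : Nonempty (F ≃* FreeGroup (Fin r)))
    (A B : Subgroup F) (c : F) (hcA : c ∈ A) (hcB : c ∈ B) (hc : c ≠ 1)
    (hA : A ≠ Subgroup.zpowers c) (hB : B ≠ Subgroup.zpowers c)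
    (hAfg : A.FG) (hBfg : B.FG)
    (hAfree : Nonempty (↥A ≃* FreeGroup (Fin a)))
    (hBfree : Nonempty (↥B ≃* FreeGroup (Fin b)))
    (hpush : ∀ (K : Type) [Group K] (f : ↥A →* K) (g : ↥B →* K),
      f ⟨c, hcA⟩ = g ⟨c, hcB⟩ →
      ∃! h : F →* K, h.comp A.subtype = f ∧ h.comp B.subtype = g) :
    r + 1 = a + b :=
  shenitzer_general r a b hF A B c hcA hcB hc hAfree hBfree hpush
end

section
/- Let G be a group with a finite-index subgroup G' such that every ascending chain of free subgroups of constant finite rank in G' stabilizes. Then every ascending chain of free subgroups of constant finite rank in G stabilizes. -/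
open Subgroup

lemma freeGroup_card_le {ι : Type*} (S : Finset (FreeGroup ι))
    (hS : Subgroup.closure (S : Set (FreeGroup ι)) = ⊤) :
    ∃ s : ℕ, s ≤ S.card ∧ Nonempty (FreeGroup ι ≃* FreeGroup (Fin s)) := by
  classical
  set φ : FreeGroup ι →* Multiplicative (ι →₀ ℤ) :=
    FreeGroup.lift (fun i => Multiplicative.ofAdd (Finsupp.single i 1)) with hφdef
  have hφ : Function.Surjective φ := by
    intro f
    obtain ⟨g, hg⟩ : ∃ x, φ x = Multiplicative.ofAdd (Multiplicative.toAdd f) := by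
      induction (Multiplicative.toAdd f) using Finsupp.induction with
      | zero => exact ⟨1, by simp⟩
      | single_add a b g _ _ ih =>
        obtain ⟨x, hx⟩ := ih
        refine ⟨(FreeGroup.of a) ^ b * x, ?_⟩
        rw [map_mul, map_zpow, hx, hφdef, FreeGroup.lift_apply_of, ← ofAdd_zsmul, ← ofAdd_add,
          Finsupp.smul_single, smul_eq_mul, mul_one]
    exact ⟨g, hg⟩
  set T : Finset (ι →₀ ℤ) := S.image (fun g => Multiplicative.toAdd (φ g)) with hTdef
  have hT : AddSubgroup.closure (T : Set (ι →₀ ℤ)) = ⊤ := by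
    have h1 : Subgroup.closure (φ '' (S : Set (FreeGroup ι))) = ⊤ := by
      rw [← MonoidHom.map_closure, hS, ← MonoidHom.range_eq_map,
        MonoidHom.range_eq_top_of_surjective φ hφ]
    have h2 : Subgroup.closure (φ '' (S : Set (FreeGroup ι)))
        ≤ AddSubgroup.toSubgroup (AddSubgroup.closure (T : Set (ι →₀ ℤ))) := by
      rw [Subgroup.closure_le]
      rintro x ⟨y, hy, rfl⟩
      show Multiplicative.toAdd (φ y) ∈ AddSubgroup.closure (T : Set (ι →₀ ℤ))
      exact AddSubgroup.subset_closure (by simp [hTdef]; exact ⟨y, hy, rfl⟩)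
    rw [h1, top_le_iff] at h2
    rw [AddSubgroup.eq_top_iff']
    intro x
    have := h2 ▸ Subgroup.mem_top (Multiplicative.ofAdd x)
    exact this
  have hspan : Submodule.span ℤ (T : Set (ι →₀ ℤ)) = ⊤ := by
    rw [Submodule.eq_top_iff']
    intro x
    have : x ∈ (Submodule.span ℤ (T : Set (ι →₀ ℤ))).toAddSubgroup := by
      rw [Submodule.span_int_eq_addSubgroupClosure, hT]; trivial
    exact this
  haveI : Module.Finite ℤ (ι →₀ ℤ) :=
    ⟨by rw [Submodule.fg_def]; exact ⟨T, T.finite_toSet, hspan⟩⟩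
  haveI : Finite ι := Module.Finite.finite_basis (Finsupp.basisSingleOne (R := ℤ))
  haveI : Fintype ι := Fintype.ofFinite ι
  refine ⟨Fintype.card ι, ?_, ⟨FreeGroup.freeGroupCongr (Fintype.equivFin ι)⟩⟩
  have h3 : Module.finrank ℤ (ι →₀ ℤ) ≤ T.card := by
    have := finrank_span_le_card (R := ℤ) (T : Set (ι →₀ ℤ))
    rw [hspan] at this
    simpa using this
  calc Fintype.card ι = Module.finrank ℤ (ι →₀ ℤ) := (Module.finrank_finsupp_self ℤ).symm
    _ ≤ T.card := h3
    _ ≤ S.card := Finset.card_image_le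

lemma subgroup_free_rank {r : ℕ} (Q : Subgroup (FreeGroup (Fin r))) (hQ : Q.index ≠ 0) :
    ∃ s : ℕ, s ≤ Q.index * r ∧ Nonempty (↥Q ≃* FreeGroup (Fin s)) := by
  classical
  haveI : Q.FiniteIndex := ⟨hQ⟩
  haveI : Group.FG (FreeGroup (Fin r)) :=
    Group.fg_iff.mpr ⟨Set.range FreeGroup.of, FreeGroup.closure_range_of _, Set.finite_range _⟩
  have hrankF : Group.rank (FreeGroup (Fin r)) ≤ r := by
    have hcl : Subgroup.closure ((Finset.univ.image (FreeGroup.of : Fin r → FreeGroup (Fin r))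
        : Finset (FreeGroup (Fin r))) : Set (FreeGroup (Fin r))) = ⊤ := by
      rw [Finset.coe_image, Finset.coe_univ, Set.image_univ, FreeGroup.closure_range_of]
    exact (Group.rank_le hcl).trans (Finset.card_image_le.trans (by simp))
  have hrank : Group.rank ↥Q ≤ Q.index * r :=
    (Subgroup.rank_le_index_mul_rank Q).trans (Nat.mul_le_mul_left _ hrankF)
  obtain ⟨S, hScard, hStop⟩ := Group.rank_spec ↥Q
  let e : ↥Q ≃* FreeGroup (IsFreeGroup.Generators ↥Q) := IsFreeGroup.toFreeGroup ↥Q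
  have hcl : Subgroup.closure ((S.image (fun x => e x) : Finset (FreeGroup (IsFreeGroup.Generators ↥Q))) : Set (FreeGroup (IsFreeGroup.Generators ↥Q))) = ⊤ := by
    rw [Finset.coe_image]
    have : (fun x => e x) '' (S : Set ↥Q) = (e : ↥Q →* FreeGroup (IsFreeGroup.Generators ↥Q)) '' (S : Set ↥Q) := rfl
    rw [this, ← MonoidHom.map_closure, hStop, ← MonoidHom.range_eq_map,
      MonoidHom.range_eq_top_of_surjective _ e.surjective]
  obtain ⟨s, hs, ⟨f⟩⟩ := freeGroup_card_le (S.image (fun x => e x)) hcl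
  refine ⟨s, ?_, ⟨e.trans f⟩⟩
  calc s ≤ (S.image (fun x => e x)).card := hs
    _ ≤ S.card := Finset.card_image_le
    _ = Group.rank ↥Q := hScard
    _ ≤ Q.index * r := hrank




/-- If a finite-index subgroup `G'` of `G` satisfies the ascending chain
condition for free subgroups of constant finite rank, then so does `G`. -/
theorem acc_of_finite_index {G : Type*} [Group G] (G' : Subgroup G)
    [G'.FiniteIndex]
    (hG' : ∀ (s : ℕ) (K : ℕ → Subgroup ↥G'), Monotone K →
      (∀ i, Nonempty (↥(K i) ≃* FreeGroup (Fin s))) →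
      ∃ N, ∀ i, N ≤ i → K i = K N)
    (r : ℕ) (H : ℕ → Subgroup G) (hmono : Monotone H)
    (hfree : ∀ i, Nonempty (↥(H i) ≃* FreeGroup (Fin r))) :
    ∃ N, ∀ i, N ≤ i → H i = H N := by
  classical
  have hGidx : G'.index ≠ 0 := Subgroup.FiniteIndex.index_ne_zero
  -- choose the isomorphisms
  have e : ∀ i, ↥(H i) ≃* FreeGroup (Fin r) := fun i => (hfree i).some
  -- relIndex facts
  have hrel_ne : ∀ i, G'.relIndex (H i) ≠ 0 := by
    intro i
    haveI := Subgroup.instFiniteIndex_subgroupOf G' (H i)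
    exact Subgroup.FiniteIndex.index_ne_zero
  have hrel_le : ∀ i, G'.relIndex (H i) ≤ G'.index := by
    intro i
    rw [← Subgroup.relIndex_top_right (H := G')]
    exact Subgroup.relIndex_le_of_le_right le_top
      (by rw [Subgroup.relIndex_top_right]; exact hGidx)
  -- the image subgroups in the free group
  set P : ∀ i, Subgroup ↥(H i) := fun i => G'.subgroupOf (H i) with hP
  set Q : ∀ i, Subgroup (FreeGroup (Fin r)) := fun i => (P i).map (e i).toMonoidHom with hQ
  have hQidx : ∀ i, (Q i).index = G'.relIndex (H i) := by
    intro i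
    have : (Q i).index = (P i).index := by
      rw [hQ]
      simp only
      rw [Subgroup.index_map,
        (MonoidHom.ker_eq_bot_iff (e i).toMonoidHom).mpr (e i).injective,
        MonoidHom.range_eq_top_of_surjective _ (e i).surjective, Subgroup.index_top, mul_one,
        sup_bot_eq]
    rw [this]
    rfl
  -- ranks of the intersections
  have hfr : ∀ i, ∃ s : ℕ, s ≤ G'.index * r ∧ Nonempty (↥(Q i) ≃* FreeGroup (Fin s)) := by
    intro i
    obtain ⟨s, hs, hiso⟩ := subgroup_free_rank (Q i) (by rw [hQidx i]; exact hrel_ne i)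
    exact ⟨s, hs.trans (Nat.mul_le_mul_right _ (by rw [hQidx i]; exact hrel_le i)), hiso⟩
  choose s hsle hsiso using hfr
  -- the chain in G'
  set K : ℕ → Subgroup ↥G' := fun i => (H i).subgroupOf G' with hK
  have hKmono : Monotone K := fun i j h => Subgroup.comap_mono (hmono h)
  -- iso between K i and Q i
  have hKiso : ∀ i, Nonempty (↥(K i) ≃* FreeGroup (Fin (s i))) := by
    intro i
    have a1 : ↥(K i) ≃* ↥(H i ⊓ G') := by
      rw [hK]
      simp only
      refine (MulEquiv.subgroupCongr (Subgroup.inf_subgroupOf_right (H i) G').symm).trans ?_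
      exact Subgroup.subgroupOfEquivOfLe inf_le_right
    have a2 : ↥(P i) ≃* ↥(G' ⊓ H i) := by
      rw [hP]
      simp only
      refine (MulEquiv.subgroupCongr (Subgroup.inf_subgroupOf_right G' (H i)).symm).trans ?_
      exact Subgroup.subgroupOfEquivOfLe inf_le_right
    have a3 : ↥(H i ⊓ G') ≃* ↥(G' ⊓ H i) := MulEquiv.subgroupCongr (inf_comm _ _)
    have a4 : ↥(P i) ≃* ↥(Q i) := (e i).subgroupMap (P i)
    exact ⟨(((a1.trans a3).trans a2.symm).trans a4).trans (hsiso i).some⟩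
  -- pigeonhole
  set B := G'.index * r with hB
  obtain ⟨v, hv⟩ := Finite.exists_infinite_fiber (fun i => (⟨s i, Nat.lt_succ_of_le (hsle i)⟩ :
    Fin (B + 1)))
  have hinf : (setOf (fun i => s i = (v : ℕ))).Infinite := by
    rw [← Set.infinite_coe_iff]
    refine Set.infinite_coe_iff.mpr (Set.Infinite.mono ?_ (Set.infinite_coe_iff.mp hv))
    intro x hx
    simp only [Set.mem_preimage, Set.mem_singleton_iff] at hx
    simp only [Set.mem_setOf_eq, ← hx]
    exact rfl
  set m := Nat.nth (fun i => s i = (v : ℕ)) with hm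
  have hmmono : StrictMono m := Nat.nth_strictMono hinf
  have hmval : ∀ k, s (m k) = (v : ℕ) := fun k => Nat.nth_mem_of_infinite hinf k
  -- apply the hypothesis
  obtain ⟨N₀, hN₀⟩ := hG' (v : ℕ) (fun k => K (m k))
    (fun a b hab => hKmono (hmmono.monotone hab))
    (fun k => by rw [← hmval k]; exact hKiso (m k))
  set M := m N₀ with hMdef
  have hKconst : ∀ i, M ≤ i → K i = K M := by
    intro i hi
    refine le_antisymm ?_ (hKmono hi)
    have h1 : i ≤ m (max N₀ i) := le_trans (le_max_right _ _) (hmmono.le_apply)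
    calc K i ≤ K (m (max N₀ i)) := hKmono h1
      _ = K (m N₀) := hN₀ _ (le_max_left _ _)
      _ = K M := rfl
  -- translate back: intersections with G' are constant
  set L : Subgroup G := H M ⊓ G' with hL
  have hLconst : ∀ i, M ≤ i → H i ⊓ G' = L := by
    intro i hi
    have := congrArg (Subgroup.map G'.subtype) (hKconst i hi)
    rwa [hK, Subgroup.subgroupOf_map_subtype, Subgroup.subgroupOf_map_subtype] at this
  have hLle : ∀ i, M ≤ i → L ≤ H i := fun i hi =>
    le_trans (le_of_eq (hLconst i hi).symm) inf_le_left
  -- the index function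
  set g : ℕ → ℕ := fun i => L.relIndex (H i) with hg
  have hgeq : ∀ i, M ≤ i → g i = G'.relIndex (H i) := by
    intro i hi
    rw [hg]
    simp only
    rw [← hLconst i hi, inf_comm, Subgroup.relIndex, Subgroup.inf_subgroupOf_right,
      Subgroup.relIndex]
  have hgne : ∀ i, M ≤ i → g i ≠ 0 := fun i hi => by rw [hgeq i hi]; exact hrel_ne i
  have hgle : ∀ i, M ≤ i → g i ≤ G'.index := fun i hi => by rw [hgeq i hi]; exact hrel_le i
  have hgmul : ∀ i j, M ≤ i → i ≤ j → g i * (H i).relIndex (H j) = g j := by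
    intro i j hi hij
    exact Subgroup.relIndex_mul_relIndex L (H i) (H j) (hLle i hi) (hmono hij)
  have hgmono : ∀ i j, M ≤ i → i ≤ j → g i ≤ g j := by
    intro i j hi hij
    have h := hgmul i j hi hij
    exact Nat.le_of_dvd (Nat.pos_of_ne_zero (hgne j (hi.trans hij))) ⟨_, h.symm⟩
  -- extract the max
  have hVne : (g '' Set.Ici M).Nonempty := ⟨g M, M, le_refl M, rfl⟩
  have hVbdd : BddAbove (g '' Set.Ici M) := by
    refine ⟨G'.index, ?_⟩
    rintro x ⟨i, hi, rfl⟩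
    exact hgle i hi
  obtain ⟨N, hNM, hgN⟩ := Nat.sSup_mem hVne hVbdd
  refine ⟨N, fun i hi => ?_⟩
  have hgi : g i = g N := by
    refine le_antisymm ?_ (hgmono N i hNM hi)
    rw [hgN]
    exact le_csSup hVbdd ⟨i, hNM.trans hi, rfl⟩
  have hmul := hgmul N i hNM hi
  rw [hgi] at hmul
  have h1 : (H N).relIndex (H i) = 1 := by
    have := Nat.eq_of_mul_eq_mul_left (Nat.pos_of_ne_zero (hgne N hNM))
      (hmul.trans (mul_one (g N)).symm)
    exact this
  exact le_antisymm (Subgroup.relIndex_eq_one.mp h1) (hmono hi)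
end
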